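/- arXiv:1005.5542 — 3 statements merged into one kernel-verified Lean document; each statement's English description precedes it below -/
import Mathlib

section
/- A topological group G contains a closed copy of the Arens space S₂ if and only if G contains a closed copy of the sequential fan S_ω. -/
/-- The convergent sequence `C₀ = {(0,0)} ∪ {(1/n, 0) : n ≥ 1}`. -/
def arensC0 : Set (ℝ × ℝ) :=
  {(0, 0)} ∪ {p | ∃ n : ℕ, 0 < n ∧ p = (1 / (n : ℝ), 0)}

/-- The convergent sequence `Cₙ = {(1/n, 0)} ∪ {(1/n, 1/(nm)) : m ≥ 1}`. -/
def arensC (n : ℕ) : Set (ℝ × ℝ) :=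
  {(1 / (n : ℝ), 0)} ∪ {p | ∃ m : ℕ, 0 < m ∧ p = (1 / (n : ℝ), 1 / ((n : ℝ) * (m : ℝ)))}

/-- The underlying set of the Arens space `S₂`. -/
def arensCarrier : Set (ℝ × ℝ) :=
  arensC0 ∪ ⋃ n ∈ {n : ℕ | 0 < n}, arensC n

/-- The Arens space `S₂` as a type. -/
def ArensS2 : Type := ↥arensCarrier

/-- The convergent sequences indexing the inductive topology of `S₂`. -/
def arensSeq : Option {n : ℕ // 0 < n} → Set (ℝ × ℝ)
  | none => arensC0
  | some n => arensC n.val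

/-- The Arens topology: the strongest (final/inductive) topology inducing the planar
topology on each of the convergent sequences `C₀, C₁, C₂, …`. -/
instance : TopologicalSpace ArensS2 :=
  ⨆ i : Option {n : ℕ // 0 < n},
    TopologicalSpace.coinduced
      (fun x : {x : ArensS2 // Subtype.val x ∈ arensSeq i} => x.val)
      (TopologicalSpace.induced
        (fun x : {x : ArensS2 // Subtype.val x ∈ arensSeq i} => Subtype.val (Subtype.val x))
        inferInstance)

/-- Identify all the points of the convergent sequence `C₀` in `S₂`. -/
def arensSetoid : Setoid ArensS2 where
  r x y := x = y ∨ (Subtype.val x ∈ arensC0 ∧ Subtype.val y ∈ arensC0)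
  iseqv := by
    refine ⟨fun x => Or.inl rfl, ?_, ?_⟩
    · rintro x y (rfl | ⟨h1, h2⟩)
      · exact Or.inl rfl
      · exact Or.inr ⟨h2, h1⟩
    · rintro x y z (rfl | ⟨h1, h2⟩) (rfl | ⟨h3, h4⟩)
      · exact Or.inl rfl
      · exact Or.inr ⟨h3, h4⟩
      · exact Or.inr ⟨h1, h2⟩
      · exact Or.inr ⟨h1, h4⟩

/-- The sequential fan `S_ω`, the quotient of `S₂` collapsing `C₀` to a point,
with the quotient topology. -/
def SeqFanSω : Type := Quotient arensSetoid

instance : TopologicalSpace SeqFanSω :=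
  instTopologicalSpaceQuotient


/-!
If `p : X → G` is a proper map into a Hausdorff topological group and `c : X → G` is continuous
with values in a compact set `K`, then `x ↦ p x * c x` is proper: it is `(p, c)` followed by the
shear homeomorphism `(y, k) ↦ (y * k, k)` of `G × K` and the proper projection `G × K → G`. An
injective proper map is a closed embedding, and `G` is Hausdorff as soon as it has a closed point.

From a closed copy `e` of `S₂`, with `a = e (0, 0)` and `r` the retraction of `S₂` onto `C₀`, the
map `x ↦ e x * (e (r x))⁻¹ * a` is therefore proper; it collapses `C₀` to `a` and moves every
spine to a sequence converging to `a`, so it descends to a closed copy of `S_ω`. Conversely, from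
a closed copy `f` of `S_ω` with apex `α` and spines `yₙ`, the spine `y₀` plays the role of `C₀`
and the translate `yₙ₊₁ * α⁻¹ * y₀ n` of the next spine converges to `y₀ n`; here `p` is `f`
composed with the quotient map `S₂ → S_ω`, which is proper because it collapses only the compact
set `C₀`. In both directions the spines are first thinned out to make the map injective; this is
possible because each spine meets only finitely many forbidden values (for `S_ω`, because two
sequences with different limits meet only finitely often).
-/
open Topology Filter Set Function

theorem Nat.finite_setOf_not_of_eventually_atTop {p : ℕ → Prop} (h : ∀ᶠ n in atTop, p n) :
    {n | ¬p n}.Finite :=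
  eventually_cofinite.1 (Nat.cofinite_eq_atTop ▸ h)

theorem setOf_exists_pos_eq_range {α : Type*} (f : ℕ → α) :
    {p | ∃ k, 0 < k ∧ p = f k} = range fun n => f (n + 1) := by
  ext p
  constructor
  · rintro ⟨k, hk, rfl⟩
    obtain ⟨n, rfl⟩ := Nat.exists_eq_add_one_of_ne_zero hk.ne'
    exact ⟨n, rfl⟩
  · rintro ⟨n, rfl⟩
    exact ⟨n + 1, n.succ_pos, rfl⟩

section ConvergentSequence

variable {Y : Type*} [TopologicalSpace Y] [T2Space Y]

theorem isClosed_of_subset_insert_range {c : ℕ → Y} {y : Y} (hc : Tendsto c atTop (𝓝 y))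
    {T : Set Y} (hT : T ⊆ insert y (range c)) (hfin : y ∉ T → {m | c m ∈ T}.Finite) :
    IsClosed T := by
  by_cases hy : y ∈ T
  · have hcT : Tendsto (c ∘ Subtype.val : {m | c m ∈ T} → Y) cofinite (𝓝 y) :=
      (Nat.cofinite_eq_atTop ▸ hc).comp Subtype.val_injective.tendsto_cofinite
    convert hcT.isCompact_insert_range_of_cofinite.isClosed
    ext z
    constructor
    · intro hz
      rcases hT hz with rfl | ⟨m, rfl⟩
      exacts [mem_insert _ _, mem_insert_of_mem _ ⟨⟨m, hz⟩, rfl⟩]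
    · rintro (rfl | ⟨⟨m, hm⟩, rfl⟩)
      exacts [hy, hm]
  · refine (((hfin hy).image c).subset fun z hz => ?_).isClosed
    rcases hT hz with rfl | ⟨m, rfl⟩
    exacts [absurd hz hy, ⟨m, hz, rfl⟩]

theorem isOpen_coinduced_induced_iff {X : Type*} {ι : X → Y} (hι : Injective ι) {s : ℕ → X}
    {l : X} (hlim : Tendsto (ι ∘ s) atTop (𝓝 (ι l))) {C : Set Y}
    (hC : C = insert (ι l) (range (ι ∘ s))) {U : Set X} :
    IsOpen[TopologicalSpace.coinduced (fun x : {x // ι x ∈ C} => x.val)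
        (TopologicalSpace.induced (fun x : {x // ι x ∈ C} => ι x.val) ‹_›)] U ↔
      (l ∈ U → ∀ᶠ m in atTop, s m ∈ U) := by
  subst hC
  rw [isOpen_coinduced, isOpen_induced_iff]
  constructor
  · rintro ⟨V, hV, hVU⟩ hl
    have key : ∀ x (hx : ι x ∈ insert (ι l) (range (ι ∘ s))), ι x ∈ V ↔ x ∈ U :=
      fun x hx => Set.ext_iff.1 hVU ⟨x, hx⟩
    filter_upwards [hlim (hV.mem_nhds ((key l (mem_insert _ _)).2 hl))] with m hm
    exact (key _ (mem_insert_of_mem _ ⟨m, rfl⟩)).1 hm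
  · intro h
    set K := ι '' {x | x ∉ U ∧ ι x ∈ insert (ι l) (range (ι ∘ s))}
    have hK : IsClosed K := by
      refine isClosed_of_subset_insert_range hlim (image_subset_iff.2 fun x hx => hx.2)
        fun hlK => ?_
      have hl : l ∈ U := by_contra fun hl => hlK ⟨l, ⟨hl, mem_insert _ _⟩, rfl⟩
      refine (Nat.finite_setOf_not_of_eventually_atTop (h hl)).subset ?_
      rintro m ⟨x, hx, hxm⟩
      simpa [← hι hxm] using hx.1
    refine ⟨Kᶜ, hK.isOpen_compl, ?_⟩
    ext ⟨x, hx⟩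
    simp only [mem_preimage, mem_compl_iff, K, mem_image, hι.eq_iff]
    constructor
    · intro hxK
      by_contra hxU
      exact hxK ⟨x, ⟨hxU, hx⟩, rfl⟩
    · rintro hxU ⟨_, ⟨hx'U, -⟩, rfl⟩
      exact hx'U hxU

theorem finite_preimage_range_of_tendsto {c d : ℕ → Y} {x y : Y} (hc : Injective c)
    (hcx : Tendsto c atTop (𝓝 x)) (hdy : Tendsto d atTop (𝓝 y)) (hxy : x ≠ y) :
    (c ⁻¹' range d).Finite := by
  obtain ⟨U, V, hU, hV, hUV⟩ := t2_separation_nhds hxy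
  refine ((Nat.finite_setOf_not_of_eventually_atTop (hcx.eventually_mem hU)).union
    (((Nat.finite_setOf_not_of_eventually_atTop (hdy.eventually_mem hV)).image d).preimage
      hc.injOn)).subset ?_
  rintro m ⟨j, hj⟩
  by_cases hm : c m ∈ U
  · exact Or.inr ⟨j, fun hjV => disjoint_left.1 hUV (hj ▸ hm) hjV, hj⟩
  · exact Or.inl hm

end ConvergentSequence

theorem IsProperMap.prodMk {X Y Z : Type*} [TopologicalSpace X] [TopologicalSpace Y]
    [TopologicalSpace Z] [T2Space Z] {f : X → Y} (hf : IsProperMap f) {g : X → Z}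
    (hg : Continuous g) : IsProperMap fun x => (f x, g x) := by
  have hgraph : IsClosedEmbedding fun x => (x, g x) := by
    refine ⟨isEmbedding_graph hg, ?_⟩
    convert isClosed_eq (hg.comp continuous_fst) continuous_snd
    ext ⟨x, z⟩
    simp [eq_comm]
  exact (hf.prodMap isProperMap_id).comp hgraph.isProperMap

theorem isProperMap_quotient_mk_of_collapse {X : Type*} [TopologicalSpace X] {K : Set X}
    (hKc : IsCompact K) (hK : IsClosed K) {s : Setoid X}
    (hs : ∀ x y, s x y ↔ x = y ∨ x ∈ K ∧ y ∈ K) : IsProperMap (Quotient.mk s) := by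
  refine isProperMap_iff_isClosedMap_and_compact_fibers.2 ⟨continuous_quotient_mk', ?_, ?_⟩
  · intro D hD
    have hsat :
        Quotient.mk s ⁻¹' (Quotient.mk s '' D) = D ∪ {x | x ∈ K ∧ (D ∩ K).Nonempty} := by
      ext x
      simp only [mem_preimage, mem_image, Quotient.eq, hs, mem_union, mem_ofPred_eq]
      constructor
      · rintro ⟨y, hy, rfl | ⟨hyK, hxK⟩⟩
        exacts [Or.inl hy, Or.inr ⟨hxK, y, hy, hyK⟩]
      · rintro (hx | ⟨hxK, y, hy, hyK⟩)
        exacts [⟨x, hx, Or.inl rfl⟩, ⟨y, hy, Or.inr ⟨hyK, hxK⟩⟩]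
    rw [← isQuotientMap_quotient_mk'.isClosed_preimage]
    change IsClosed (Quotient.mk s ⁻¹' (Quotient.mk s '' D))
    rw [hsat]
    by_cases hDK : (D ∩ K).Nonempty
    · simpa [hDK] using hD.union hK
    · simpa [hDK] using hD
  · intro y
    induction y using Quotient.inductionOn with
    | h x =>
      by_cases hx : x ∈ K
      · convert hKc using 1
        ext y
        simp only [mem_preimage, mem_singleton_iff, Quotient.eq, hs]
        exact ⟨by rintro (rfl | h); exacts [hx, h.1], fun hy => Or.inr ⟨hy, hx⟩⟩
      · convert isCompact_singleton (x := x) using 1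
        ext y
        simp [Quotient.eq, hs, hx]

section TopologicalGroup

variable {G : Type*} [Group G] [TopologicalSpace G] [IsTopologicalGroup G]

theorem IsTopologicalGroup.t2Space_of_isClosed_singleton {a : G} (ha : IsClosed ({a} : Set G)) :
    T2Space G :=
  IsTopologicalGroup.t2Space_iff_one_closed.2 (by simpa using ha.preimage (continuous_mul_const a))

theorem IsProperMap.mul_of_isCompact [T2Space G] {X : Type*} [TopologicalSpace X] {f g : X → G}
    (hf : IsProperMap f) (hg : Continuous g) {K : Set G} (hK : IsCompact K)
    (hgK : ∀ x, g x ∈ K) : IsProperMap fun x => f x * g x := by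
  have : CompactSpace K := isCompact_iff_compactSpace.mp hK
  let shear : G × K ≃ₜ G × K :=
    { toFun := fun q => (q.1 * q.2, q.2)
      invFun := fun q => (q.1 * (q.2 : G)⁻¹, q.2)
      left_inv := fun _ => by simp
      right_inv := fun _ => by simp }
  exact isProperMap_fst_of_compactSpace.comp
    (shear.isProperMap.comp (hf.prodMk (hg.subtype_mk hgK)))

theorem finite_preimage_insert_range_mul_const [T2Space G] {c d : ℕ → G} {a g : G}
    (hc : Injective c) (hca : Tendsto c atTop (𝓝 a)) (hda : Tendsto d atTop (𝓝 a))
    (hg : g ≠ 1) :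
    ((c · * g) ⁻¹' insert a (range d)).Finite := by
  rw [insert_eq, preimage_union]
  refine ((finite_singleton a).preimage ((mul_left_injective g).comp hc).injOn).union ?_
  refine (finite_preimage_range_of_tendsto hc hca (hda.mul_const g⁻¹) ?_).subset ?_
  · simpa using hg
  · rintro u ⟨j, hj⟩
    exact ⟨j, (eq_mul_inv_of_mul_eq hj.symm).symm⟩

end TopologicalGroup

theorem Function.Injective.uncurry_eq_iff {α β γ : Type*} {f : α → β → γ}
    (hf : Injective (uncurry f)) {a a' : α} {b b' : β} : f a b = f a' b' ↔ a = a' ∧ b = b' :=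
  (hf.eq_iff (a := (a, b)) (b := (a', b'))).trans Prod.mk_inj

theorem exists_seq_forall_notMem {Bad : (k : ℕ) → ((j : ℕ) → j < k → ℕ) → Set ℕ}
    (hBad : ∀ k s, (Bad k s).Finite) :
    ∃ s : ℕ → ℕ, ∀ k, s k ∉ Bad k fun j _ => s j := by
  choose pick hpick using fun k s => (hBad k s).infinite_compl.nonempty
  exact ⟨Nat.strongRec pick, fun k => by beta_reduce; rw [Nat.strongRec_eq]; exact hpick _ _⟩

theorem exists_reindex_injective {α : Type*} (v : ℕ → ℕ → α) (hv : ∀ n, Injective (v n))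
    {A : Set α} (hA : ∀ n, (v n ⁻¹' A).Finite) :
    ∃ t : ℕ → ℕ → ℕ, (∀ n, Injective (t n)) ∧
      Injective (uncurry fun n m => v n (t n m)) ∧ ∀ n m, v n (t n m) ∉ A := by
  -- Position `(n, m)` is filled at step `Nat.pair n m`, avoiding `A` and every earlier value.
  obtain ⟨s, hs⟩ := exists_seq_forall_notMem
    (Bad := fun k s => v k.unpair.1 ⁻¹' A ∪
      ⋃ j : Fin k, v k.unpair.1 ⁻¹' {v j.1.unpair.1 (s j j.2)})
    fun k s => (hA _).union (finite_iUnion fun j => (finite_singleton _).preimage (hv _).injOn)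
  have hne : ∀ j k, j < k → v j.unpair.1 (s j) ≠ v k.unpair.1 (s k) :=
    fun j k hjk h => hs k (Or.inr (mem_iUnion.2 ⟨⟨j, hjk⟩, h.symm⟩))
  have hinj : Injective (uncurry fun n m => v n (s (Nat.pair n m))) := by
    rintro ⟨n, m⟩ ⟨n', m'⟩ h
    have : Nat.pair n m = Nat.pair n' m' := by
      rcases lt_trichotomy (Nat.pair n m) (Nat.pair n' m') with hlt | heq | hgt
      · exact absurd (by simpa using h) (hne _ _ hlt)
      · exact heq
      · exact absurd (by simpa using h.symm) (hne _ _ hgt)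
    simpa using this
  exact ⟨fun n m => s (Nat.pair n m),
    fun n m m' h => (hinj.uncurry_eq_iff.1 (congrArg (v n) h)).2, hinj,
    fun n m hmA => hs (Nat.pair n m) (Or.inl (by simpa using hmA))⟩

namespace ArensS2

/-! The paper's indices `n, m ≥ 1` are shifted to start at `0`: `axisPt n` is the point
`(1/(n+1), 0)` of `C₀` and `spinePt n m` the point `(1/(n+1), 1/((n+1)(m+1)))` of `Cₙ₊₁`. -/

noncomputable def origin : ArensS2 := (⟨(0, 0), Or.inl (Or.inl rfl)⟩ : arensCarrier)

noncomputable def axisPt (n : ℕ) : ArensS2 :=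
  (⟨(1 / ((n + 1 : ℕ) : ℝ), 0), Or.inl (Or.inr ⟨n + 1, n.succ_pos, rfl⟩)⟩ :
    arensCarrier)

noncomputable def spinePt (n m : ℕ) : ArensS2 :=
  (⟨(1 / ((n + 1 : ℕ) : ℝ), 1 / (((n + 1 : ℕ) : ℝ) * ((m + 1 : ℕ) : ℝ))),
    Or.inr (mem_biUnion n.succ_pos (Or.inr ⟨m + 1, m.succ_pos, rfl⟩))⟩ : arensCarrier)

noncomputable def ofIndex : Option (ℕ ⊕ ℕ × ℕ) → ArensS2
  | none => origin
  | some (.inl n) => axisPt n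
  | some (.inr (n, m)) => spinePt n m

theorem ofIndex_injective : Injective ofIndex := by
  intro i j h
  obtain ⟨h1, h2⟩ := Prod.ext_iff.1 (congrArg Subtype.val h)
  rcases i with _ | n | ⟨n, m⟩ <;> rcases j with _ | k | ⟨k, j⟩ <;>
    simp [ofIndex, origin, axisPt, spinePt] at h1 h2 ⊢ <;> (try obtain rfl := h1) <;>
    simp_all [Nat.cast_add_one_ne_zero, eq_comm (a := (0 : ℝ))]

theorem arensC0_eq : arensC0 = insert origin.val (range (Subtype.val ∘ axisPt)) := by
  rw [arensC0, singleton_union,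
    setOf_exists_pos_eq_range (fun k : ℕ => (1 / (k : ℝ), (0 : ℝ)))]
  rfl

theorem arensC_succ_eq (n : ℕ) :
    arensC (n + 1) = insert (axisPt n).val (range (Subtype.val ∘ spinePt n)) := by
  rw [arensC, singleton_union, setOf_exists_pos_eq_range
    (fun k : ℕ => (1 / ((n + 1 : ℕ) : ℝ), 1 / (((n + 1 : ℕ) : ℝ) * (k : ℝ))))]
  rfl

theorem ofIndex_surjective : Surjective ofIndex := by
  rintro ⟨q, hq | hq⟩
  · rw [arensC0_eq] at hq
    rcases hq with rfl | ⟨n, rfl⟩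
    exacts [⟨none, rfl⟩, ⟨some (.inl n), rfl⟩]
  · obtain ⟨k, hk, hq⟩ := mem_iUnion₂.1 hq
    obtain ⟨n, rfl⟩ := Nat.exists_eq_add_one_of_ne_zero (Nat.pos_iff_ne_zero.1 hk)
    rw [arensC_succ_eq] at hq
    rcases hq with rfl | ⟨m, rfl⟩
    exacts [⟨some (.inl n), rfl⟩, ⟨some (.inr (n, m)), rfl⟩]

@[elab_as_elim]
theorem induction {motive : ArensS2 → Prop} (origin : motive origin)
    (axisPt : ∀ n, motive (axisPt n)) (spinePt : ∀ n m, motive (spinePt n m)) (x : ArensS2) :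
    motive x := by
  obtain ⟨_ | n | ⟨n, m⟩, rfl⟩ := ofIndex_surjective x
  exacts [origin, axisPt n, spinePt n m]

@[simp]
theorem axisPt_inj {n k : ℕ} : axisPt n = axisPt k ↔ n = k :=
  ⟨fun h => by simpa using @ofIndex_injective (some (.inl n)) (some (.inl k)) h, congrArg _⟩

@[simp]
theorem spinePt_inj {n m k j : ℕ} : spinePt n m = spinePt k j ↔ n = k ∧ m = j :=
  ⟨fun h => by simpa using @ofIndex_injective (some (.inr (n, m))) (some (.inr (k, j))) h,
    by rintro ⟨rfl, rfl⟩; rfl⟩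

@[simp]
theorem axisPt_ne_origin (n : ℕ) : axisPt n ≠ origin :=
  fun h => by simpa using @ofIndex_injective (some (.inl n)) none h

@[simp]
theorem spinePt_ne_origin (n m : ℕ) : spinePt n m ≠ origin :=
  fun h => by simpa using @ofIndex_injective (some (.inr (n, m))) none h

@[simp]
theorem spinePt_ne_axisPt (n m k : ℕ) : spinePt n m ≠ axisPt k :=
  fun h => by simpa using @ofIndex_injective (some (.inr (n, m))) (some (.inl k)) h

@[simp]
theorem origin_ne_axisPt (n : ℕ) : origin ≠ axisPt n := (axisPt_ne_origin n).symm

@[simp]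
theorem origin_ne_spinePt (n m : ℕ) : origin ≠ spinePt n m := (spinePt_ne_origin n m).symm

@[simp]
theorem axisPt_ne_spinePt (k n m : ℕ) : axisPt k ≠ spinePt n m := (spinePt_ne_axisPt n m k).symm

def base : Set ArensS2 := {x | x.val ∈ arensC0}

theorem base_eq : base = insert origin (range axisPt) := by
  ext x
  change x.val ∈ arensC0 ↔ _
  rw [arensC0_eq]
  constructor
  · rintro (h | ⟨n, h⟩)
    exacts [Or.inl (Subtype.ext h), Or.inr ⟨n, Subtype.ext h⟩]
  · rintro (rfl | ⟨n, rfl⟩)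
    exacts [Or.inl rfl, Or.inr ⟨n, rfl⟩]

@[simp]
theorem origin_mem_base : origin ∈ base := by simp [base_eq]

@[simp]
theorem axisPt_mem_base (n : ℕ) : axisPt n ∈ base := by simp [base_eq]

@[simp]
theorem spinePt_notMem_base (n m : ℕ) : spinePt n m ∉ base := by simp [base_eq]

noncomputable def elim {α : Type*} (o : α) (b : ℕ → α) (p : ℕ → ℕ → α) (x : ArensS2) :
    α :=
  ((Equiv.ofBijective ofIndex ⟨ofIndex_injective, ofIndex_surjective⟩).symm x).elim o
    (Sum.elim b (uncurry p))

section Elim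

variable {α : Type*} (o : α) (b : ℕ → α) (p : ℕ → ℕ → α)

theorem elim_ofIndex (i : Option (ℕ ⊕ ℕ × ℕ)) :
    elim o b p (ofIndex i) = i.elim o (Sum.elim b (uncurry p)) :=
  congrArg (Option.elim · o _) (Equiv.ofBijective_symm_apply_apply _ _ i)

@[simp]
theorem elim_origin : elim o b p origin = o := elim_ofIndex o b p none

@[simp]
theorem elim_axisPt (n : ℕ) : elim o b p (axisPt n) = b n := elim_ofIndex o b p (some (.inl n))

@[simp]
theorem elim_spinePt (n m : ℕ) : elim o b p (spinePt n m) = p n m :=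
  elim_ofIndex o b p (some (.inr (n, m)))

theorem elim_mem {S : Set α} (ho : o ∈ S) (hb : ∀ n, b n ∈ S) (hp : ∀ n m, p n m ∈ S)
    (x : ArensS2) : elim o b p x ∈ S := by
  induction x using induction <;> simp [*]

theorem injective_elim {o : α} {b : ℕ → α} {p : ℕ → ℕ → α} (hb : Injective b)
    (hp : Injective (uncurry p)) (ho : o ∉ range b)
    (hpo : ∀ n m, p n m ∉ insert o (range b)) : Injective (elim o b p) := by
  simp only [mem_range, mem_insert_iff, not_or, not_exists] at ho hpo
  intro x y h
  induction x using induction <;> induction y using induction <;>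
    simp_all [hb.eq_iff, hp.uncurry_eq_iff, eq_comm (a := o), eq_comm (b := b _)]

end Elim

theorem tendsto_val_axisPt : Tendsto (Subtype.val ∘ axisPt) atTop (𝓝 origin.val) :=
  (tendsto_const_nhds.div_atTop
    (tendsto_natCast_atTop_atTop.comp (tendsto_add_atTop_nat 1))).prodMk_nhds tendsto_const_nhds

theorem tendsto_val_spinePt (n : ℕ) :
    Tendsto (Subtype.val ∘ spinePt n) atTop (𝓝 (axisPt n).val) :=
  tendsto_const_nhds.prodMk_nhds (tendsto_const_nhds.div_atTop
    ((tendsto_natCast_atTop_atTop.comp (tendsto_add_atTop_nat 1)).const_mul_atTop (by positivity)))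

theorem isOpen_iff {U : Set ArensS2} :
    IsOpen U ↔ (origin ∈ U → ∀ᶠ n in atTop, axisPt n ∈ U) ∧
      ∀ n, axisPt n ∈ U → ∀ᶠ m in atTop, spinePt n m ∈ U := by
  have piece {l : ArensS2} {s : ℕ → ArensS2}
      (hlim : Tendsto (Subtype.val ∘ s) atTop (𝓝 l.val)) {C : Set (ℝ × ℝ)}
      (hC : C = insert l.val (range (Subtype.val ∘ s))) :=
    isOpen_coinduced_induced_iff Subtype.val_injective hlim hC (U := U)
  refine isOpen_iSup_iff.trans ⟨fun h => ⟨(piece tendsto_val_axisPt arensC0_eq).1 (h none),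
    fun n => (piece (tendsto_val_spinePt n) (arensC_succ_eq n)).1
      (h (some ⟨n + 1, n.succ_pos⟩))⟩, ?_⟩
  rintro ⟨h0, h⟩ (_ | ⟨k, hk⟩)
  · exact (piece tendsto_val_axisPt arensC0_eq).2 h0
  · obtain ⟨n, rfl⟩ := Nat.exists_eq_add_one_of_ne_zero hk.ne'
    exact (piece (tendsto_val_spinePt n) (arensC_succ_eq n)).2 (h n)

theorem isClosed_iff {C : Set ArensS2} :
    IsClosed C ↔ (origin ∉ C → {n | axisPt n ∈ C}.Finite) ∧
      ∀ n, axisPt n ∉ C → {m | spinePt n m ∈ C}.Finite := by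
  simp only [← isOpen_compl_iff, isOpen_iff, mem_compl_iff, ← Nat.cofinite_eq_atTop,
    eventually_cofinite, not_not]

theorem tendsto_axisPt : Tendsto axisPt atTop (𝓝 origin) :=
  tendsto_nhds.2 fun _ hU h => (isOpen_iff.1 hU).1 h

theorem tendsto_spinePt (n : ℕ) : Tendsto (spinePt n) atTop (𝓝 (axisPt n)) :=
  tendsto_nhds.2 fun _ hU h => (isOpen_iff.1 hU).2 n h

theorem continuous_elim {X : Type*} [TopologicalSpace X] {o : X} {b : ℕ → X}
    {p : ℕ → ℕ → X} (hb : Tendsto b atTop (𝓝 o)) (hp : ∀ n, Tendsto (p n) atTop (𝓝 (b n))) :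
    Continuous (elim o b p) :=
  continuous_def.2 fun _ hO => isOpen_iff.2
    ⟨fun h => by simpa using hb (hO.mem_nhds (by simpa using h)),
      fun n h => by simpa using hp n (hO.mem_nhds (by simpa using h))⟩

theorem isClosed_singleton_origin : IsClosed ({origin} : Set ArensS2) :=
  isClosed_iff.2 ⟨fun h => absurd rfl h, fun n _ => by simp⟩

theorem isClosed_base : IsClosed base :=
  isClosed_iff.2 ⟨fun h => (h origin_mem_base).elim, fun n h => (h (axisPt_mem_base n)).elim⟩

theorem isCompact_base : IsCompact base :=
  base_eq ▸ tendsto_axisPt.isCompact_insert_range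

noncomputable def reindex (s : ℕ → ℕ) (t : ℕ → ℕ → ℕ) : ArensS2 → ArensS2 :=
  elim origin (axisPt ∘ s) fun n m => spinePt (s n) (t n m)

theorem isClosedEmbedding_reindex {s : ℕ → ℕ} (hs : Injective s) {t : ℕ → ℕ → ℕ}
    (ht : ∀ n, Injective (t n)) : IsClosedEmbedding (reindex s t) := by
  refine .of_continuous_injective_isClosedMap (continuous_elim
    (tendsto_axisPt.comp hs.nat_tendsto_atTop)
    fun n => (tendsto_spinePt (s n)).comp (ht n).nat_tendsto_atTop) ?_ ?_
  · intro x y h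
    induction x using induction <;> induction y using induction <;>
      simp_all [reindex, hs.eq_iff]
    obtain ⟨rfl, h⟩ := h
    exact ht _ h
  · intro C hC
    obtain ⟨h0, h⟩ := isClosed_iff.1 hC
    refine isClosed_iff.2
      ⟨fun hO => ((h0 fun h' => hO ⟨origin, h', by simp [reindex]⟩).image s).subset ?_,
        fun k hk => ?_⟩
    · rintro k ⟨x, hx, hxk⟩
      induction x using induction <;> simp [reindex] at hxk
      exact ⟨_, hx, hxk⟩
    · refine ((finite_singleton k).preimage hs.injOn |>.biUnion fun n hn =>
        (h n fun h' => hk ⟨axisPt n, h', by simpa [reindex] using hn⟩).image (t n)).subset ?_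
      rintro j ⟨x, hx, hxj⟩
      induction x using induction <;> simp [reindex] at hxj
      exact mem_biUnion hxj.1 ⟨_, hx, hxj.2⟩

end ArensS2

namespace SeqFanSω

open ArensS2

def mk : ArensS2 → SeqFanSω := Quotient.mk arensSetoid

noncomputable def apex : SeqFanSω := mk origin

@[simp]
theorem mk_origin : mk origin = apex := rfl

theorem mk_eq_mk_iff {x y : ArensS2} : mk x = mk y ↔ x = y ∨ x ∈ base ∧ y ∈ base :=
  Quotient.eq

@[simp]
theorem mk_axisPt (n : ℕ) : mk (axisPt n) = apex :=
  mk_eq_mk_iff.2 (Or.inr ⟨axisPt_mem_base n, origin_mem_base⟩)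

@[simp]
theorem mk_spinePt_inj {n m k j : ℕ} :
    mk (spinePt n m) = mk (spinePt k j) ↔ n = k ∧ m = j := by
  simp [mk_eq_mk_iff]

@[simp]
theorem mk_spinePt_ne_apex (n m : ℕ) : mk (spinePt n m) ≠ apex := by
  simp [← mk_origin, mk_eq_mk_iff]

@[simp]
theorem apex_ne_mk_spinePt (n m : ℕ) : apex ≠ mk (spinePt n m) := (mk_spinePt_ne_apex n m).symm

theorem isProperMap_mk : IsProperMap mk :=
  isProperMap_quotient_mk_of_collapse isCompact_base isClosed_base fun _ _ => Iff.rfl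

theorem isClosed_singleton_apex : IsClosed ({apex} : Set SeqFanSω) := by
  simpa using isProperMap_mk.isClosedMap _ isClosed_singleton_origin

theorem tendsto_mk_spinePt (n : ℕ) : Tendsto (mk ∘ spinePt n) atTop (𝓝 apex) := by
  simpa using (isProperMap_mk.continuous.tendsto _).comp (tendsto_spinePt n)

theorem exists_isClosedEmbedding_of_isProperMap_elim {Y : Type*} [TopologicalSpace Y] {a : Y}
    {q : ℕ → ℕ → Y} (hq : Injective (uncurry q)) (ha : ∀ n m, q n m ≠ a)
    (hψ : IsProperMap (elim a (fun _ => a) q)) : ∃ F : SeqFanSω → Y, IsClosedEmbedding F := by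
  have h : ∀ x y, elim a (fun _ => a) q x = elim a (fun _ => a) q y ↔ mk x = mk y := by
    intro x y
    induction x using induction <;> induction y using induction <;>
      simp [hq.uncurry_eq_iff, ha, eq_comm (a := a), mk_eq_mk_iff]
  refine ⟨Quotient.lift _ fun x y hxy => (h x y).2 (Quotient.sound hxy :),
    .of_continuous_injective_isClosedMap (hψ.continuous.quotient_lift _) ?_ fun C hC => ?_⟩
  · rintro ⟨x⟩ ⟨y⟩ hxy
    exact (h x y).1 hxy
  · convert hψ.isClosedMap _ (hC.preimage isProperMap_mk.continuous) using 1
    ext z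
    constructor
    · rintro ⟨⟨x⟩, hx, rfl⟩
      exact ⟨x, hx, rfl⟩
    · rintro ⟨x, hx, rfl⟩
      exact ⟨mk x, hx, rfl⟩

end SeqFanSω

section Directions

open ArensS2 SeqFanSω

variable {G : Type*} [Group G] [TopologicalSpace G] [IsTopologicalGroup G]

theorem exists_isClosedEmbedding_seqFanSω_of_arensS2 {e : ArensS2 → G}
    (he : IsClosedEmbedding e) : ∃ F : SeqFanSω → G, IsClosedEmbedding F := by
  have : T2Space G := IsTopologicalGroup.t2Space_of_isClosed_singleton (a := e origin)
    (by simpa using he.isClosedMap _ isClosed_singleton_origin)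
  set a := e origin
  let v n u := e (spinePt n u) * ((e (axisPt n))⁻¹ * a)
  have hv (n : ℕ) : Injective (v n) := fun u u' h => by
    simpa using he.injective (mul_right_cancel h)
  obtain ⟨t, ht, hvt, hva⟩ := exists_reindex_injective v hv (A := {a})
    fun n => (finite_singleton a).preimage (hv n).injOn
  have he' := he.comp (isClosedEmbedding_reindex injective_id ht)
  let r : ArensS2 → ArensS2 := elim origin axisPt fun n _ => axisPt n
  have hr : Continuous r := continuous_elim tendsto_axisPt fun n => tendsto_const_nhds
  have hψ : IsProperMap (elim a (fun _ => a) fun n m => v n (t n m)) := by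
    convert he'.isProperMap.mul_of_isCompact (g := fun x => (e (reindex id t (r x)))⁻¹ * a)
      ((he'.continuous.comp hr).inv.mul continuous_const)
      ((isCompact_base.image he'.continuous).image (continuous_inv.mul continuous_const))
      fun x => mem_image_of_mem _ (mem_image_of_mem _ (elim_mem _ _ _ origin_mem_base
        axisPt_mem_base (fun n _ => axisPt_mem_base n) x)) using 1
    funext x
    induction x using induction <;> simp [r, reindex, v, a]
  exact exists_isClosedEmbedding_of_isProperMap_elim hvt (by simpa using hva) hψ

theorem exists_isClosedEmbedding_arensS2_of_seqFanSω {f : SeqFanSω → G}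
    (hf : IsClosedEmbedding f) : ∃ e : ArensS2 → G, IsClosedEmbedding e := by
  have : T2Space G := IsTopologicalGroup.t2Space_of_isClosed_singleton (a := f apex)
    (by simpa using hf.isClosedMap _ isClosed_singleton_apex)
  set α := f apex
  let y n u := f (mk (spinePt n u))
  have hy : Injective (uncurry y) := fun ⟨n, m⟩ ⟨k, j⟩ h => by simpa using hf.injective h
  have hyα (n m : ℕ) : y n m ≠ α := hf.injective.ne (mk_spinePt_ne_apex n m)
  have hylim (n : ℕ) : Tendsto (y n) atTop (𝓝 α) :=
    (hf.continuous.tendsto apex).comp (tendsto_mk_spinePt n)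
  let v n u := y (n + 1) u * (α⁻¹ * y 0 n)
  obtain ⟨t, ht, hvt, hvA⟩ := exists_reindex_injective v
    (fun n => (mul_left_injective _).comp fun u u' h => (hy.uncurry_eq_iff.1 h).2)
    fun n => finite_preimage_insert_range_mul_const (fun u u' h => (hy.uncurry_eq_iff.1 h).2)
      (hylim (n + 1)) (hylim 0) (by simpa [inv_mul_eq_one] using (hyα 0 n).symm)
  let σ : ArensS2 → SeqFanSω :=
    elim apex (fun n => mk (spinePt 0 n)) fun n _ => mk (spinePt 0 n)
  have hσ : Continuous σ := continuous_elim (tendsto_mk_spinePt 0) fun n => tendsto_const_nhds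
  have hψ : IsProperMap (elim α (y 0) fun n m => v n (t n m)) := by
    convert (hf.isProperMap.comp (isProperMap_mk.comp
      (isClosedEmbedding_reindex Nat.succ_injective ht).isProperMap)).mul_of_isCompact
      (g := fun x => α⁻¹ * f (σ x)) (continuous_const.mul (hf.continuous.comp hσ))
      (((tendsto_mk_spinePt 0).isCompact_insert_range.image hf.continuous).image
        (continuous_const_mul α⁻¹))
      (fun x => mem_image_of_mem _ (mem_image_of_mem _ (elim_mem _ _ _
        (S := insert apex (range (mk ∘ spinePt 0))) (mem_insert _ _)
        (fun n => mem_insert_of_mem _ ⟨n, rfl⟩) (fun n _ => mem_insert_of_mem _ ⟨n, rfl⟩)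
        x))) using 1
    funext x
    induction x using induction <;> simp [σ, reindex, v, y, α]
  refine ⟨_, .of_continuous_injective_isClosedMap hψ.continuous ?_ hψ.isClosedMap⟩
  exact injective_elim (fun n k h => (hy.uncurry_eq_iff.1 h).2) hvt (fun ⟨n, h⟩ => hyα 0 n h) hvA

end Directions

theorem stmt8 {G : Type*} [Group G] [TopologicalSpace G] [IsTopologicalGroup G] :
    (∃ e : ArensS2 → G, Topology.IsClosedEmbedding e) ↔
    (∃ e : SeqFanSω → G, Topology.IsClosedEmbedding e) :=
  ⟨fun ⟨_, he⟩ => exists_isClosedEmbedding_seqFanSω_of_arensS2 he,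
    fun ⟨_, hf⟩ => exists_isClosedEmbedding_arensS2_of_seqFanSω hf⟩
end

section
/- The space C_k(M,2) of continuous {0,1}-valued functions on the countable metric fan M with the compact-open topology is sequential: every sequentially closed subset of C_k(M,2) is closed. -/
open Filter Topology

/-- The countable metric fan `M = (ω × ω) ∪ {∞}`; `none` plays the role of `∞`. -/
def Fan : Type := Option (ℕ × ℕ)

/-- The basic neighborhood `U(n) = {∞} ∪ ((ω \ n) × ω)` of `∞`. -/
def fanU (n : ℕ) : Set Fan := {x | x = none ∨ ∃ p : ℕ × ℕ, x = some p ∧ n ≤ p.1}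

/-- The fan topology: points of `ω × ω` are isolated and the sets `U(n)` are
basic neighborhoods of `∞`. -/
instance : TopologicalSpace Fan :=
  TopologicalSpace.generateFrom
    ({V | ∃ p : ℕ × ℕ, V = {some p}} ∪ {V | ∃ n : ℕ, V = fanU n})

/-!
Let `A` be sequentially closed and `f ∉ A`. Choose heights `φ 0, φ 1, …` one column at a
time so that no member of `A` agrees with `f` on `U(n) ∪ K_φ`, where
`K_φ = {∞} ∪ {(m, j) | j ≤ φ m}`. A column where no height works would give members of `A`
agreeing with `f` on ever larger sets; a pointwise convergent subsequence of them converges in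
the compact-open topology, because a compact subset of the fan meets only finitely many points
outside each `U(n)`, and its limit would be a member of `A` violating the previous stage.
Finally `K_φ` is compact, so `{h | h = f on K_φ}` is a neighbourhood of `f`; any `h` in it also
agrees with `f` on some `U(n)` and therefore lies outside `A`.
-/

open Set Function

theorem exists_forall_of_forall_exists_update {α : Type*} (P : ℕ → (ℕ → α) → Prop)
    (hP : ∀ n k k', (∀ m < n, k m = k' m) → P n k → P n k') {k₀ : ℕ → α} (h₀ : P 0 k₀)
    (step : ∀ n k, P n k → ∃ a, P (n + 1) (update k n a)) : ∃ φ, ∀ n, P n φ := by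
  classical
  have : Nonempty α := ⟨k₀ 0⟩
  choose! a ha using step
  let seq : ℕ → ℕ → α := fun n => Nat.rec k₀ (fun n k => update k n (a n k)) n
  have hseq : ∀ n, P n (seq n) := fun n => Nat.rec h₀ (fun n ih => ha n _ ih) n
  have hstable : ∀ n, ∀ m < n, seq n m = seq (m + 1) m := by
    intro n
    induction n with
    | zero => intro m hm; omega
    | succ n ih =>
      intro m hm
      rcases (Nat.lt_succ_iff.1 hm).eq_or_lt with rfl | hlt
      · rfl
      · exact (update_of_ne hlt.ne _ _).trans (ih m hlt)
  exact ⟨fun m => seq (m + 1) m, fun n => hP n _ _ (fun m hm => hstable n m hm) (hseq n)⟩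

theorem ContinuousMap.isOpen_setOf_eqOn {X Y : Type*} [TopologicalSpace X] [TopologicalSpace Y]
    [DiscreteTopology Y] {K : Set X} (hK : IsCompact K) (f : C(X, Y)) :
    IsOpen {h : C(X, Y) | EqOn h f K} := by
  have hfibers : {h : C(X, Y) | EqOn h f K} =
      ⋂ y ∈ f '' K, {h : C(X, Y) | MapsTo h (K ∩ f ⁻¹' {y}) {y}} := by
    ext h
    simp only [mem_ofPred_eq, mem_iInter, mem_image, forall_exists_index, and_imp,
      forall_apply_eq_imp_iff₂]
    exact ⟨fun hh x _ z hz => (hh hz.1).trans hz.2, fun hh z hz => hh z hz ⟨hz, rfl⟩⟩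
  rw [hfibers]
  exact (hK.image f.continuous).finite_of_discrete.isOpen_biInter fun y _ =>
    ContinuousMap.isOpen_setOfPred_mapsTo
      (hK.inter_right ((isClosed_discrete _).preimage f.continuous)) (isOpen_discrete _)

namespace Fan

instance : Countable Fan := inferInstanceAs (Countable (Option (ℕ × ℕ)))

abbrev infty : Fan := none

abbrev pt (p : ℕ × ℕ) : Fan := some p

/-- With this eliminator `induction x` keeps both cases typed as points of `Fan`; `rcases` would
retype them as `Option (ℕ × ℕ)`, which hides the topology. -/
@[induction_eliminator]
theorem induction {motive : Fan → Prop} (infty : motive infty) (pt : ∀ p, motive (pt p))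
    (x : Fan) : motive x :=
  Option.rec infty pt x

@[simp] theorem infty_mem_fanU (n : ℕ) : infty ∈ fanU n := Or.inl rfl

@[simp] theorem pt_mem_fanU {n : ℕ} {p : ℕ × ℕ} : pt p ∈ fanU n ↔ n ≤ p.1 := by
  refine ⟨?_, fun h => Or.inr ⟨p, rfl, h⟩⟩
  rintro (h | ⟨q, hq, h⟩)
  · exact absurd h (Option.some_ne_none p)
  · exact Option.some_injective _ hq ▸ h

theorem fanU_antitone : Antitone fanU := by
  rintro m n hmn x (rfl | ⟨p, rfl, hp⟩)
  exacts [Or.inl rfl, Or.inr ⟨p, rfl, hmn.trans hp⟩]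

theorem fanU_zero : fanU 0 = univ :=
  eq_univ_of_forall fun x => Fan.induction (infty_mem_fanU 0) (fun p => pt_mem_fanU.2 p.1.zero_le) x

theorem isOpen_fanU (n : ℕ) : IsOpen (fanU n) :=
  TopologicalSpace.isOpen_generateFrom_of_mem (Or.inr ⟨n, rfl⟩)

theorem isOpen_singleton_pt (p : ℕ × ℕ) : IsOpen {pt p} :=
  TopologicalSpace.isOpen_generateFrom_of_mem (Or.inl ⟨p, rfl⟩)

theorem hasBasis_nhds_infty : (𝓝 infty).HasBasis (fun _ => True) fanU := by
  have hnhds : 𝓝 infty = ⨅ n, 𝓟 (fanU n) := by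
    refine TopologicalSpace.nhds_generateFrom.trans (le_antisymm ?_ ?_)
    · exact le_iInf fun n => iInf₂_le (fanU n) ⟨infty_mem_fanU n, Or.inr ⟨n, rfl⟩⟩
    · refine le_iInf₂ fun s ⟨hs, hgen⟩ => ?_
      rcases hgen with ⟨p, rfl⟩ | ⟨n, rfl⟩
      · exact absurd hs (Option.some_ne_none p).symm
      · exact iInf_le _ n
  exact hnhds ▸ hasBasis_iInf_principal fanU_antitone.directed_ge

variable {Y : Type*} [TopologicalSpace Y]

theorem continuous_iff_exists_eqOn_fanU [DiscreteTopology Y] {g : Fan → Y} :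
    Continuous g ↔ ∃ n, ∀ x ∈ fanU n, g x = g infty := by
  refine ⟨fun hg => ?_, fun ⟨n, hn⟩ => continuous_def.2 fun U _ => ?_⟩
  · have hloc : ∀ᶠ x in 𝓝 infty, g x = g infty := by
      simpa only [ContinuousAt, nhds_discrete, tendsto_pure] using hg.continuousAt (x := infty)
    simpa only [true_and] using hasBasis_nhds_infty.eventually_iff.1 hloc
  · refine isOpen_iff_forall_mem_open.2 fun x hx => ?_
    induction x with
    | infty =>
      exact ⟨fanU n, fun y hy => by rw [mem_preimage, hn y hy]; exact hx, isOpen_fanU n,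
        infty_mem_fanU n⟩
    | pt p => exact ⟨{pt p}, singleton_subset_iff.2 hx, isOpen_singleton_pt p, rfl⟩

theorem exists_eqOn_fanU [DiscreteTopology Y] (h f : C(Fan, Y)) (h_infty : h infty = f infty) :
    ∃ n, EqOn h f (fanU n) := by
  obtain ⟨m, hm⟩ := continuous_iff_exists_eqOn_fanU.1 h.continuous
  obtain ⟨n, hn⟩ := continuous_iff_exists_eqOn_fanU.1 f.continuous
  refine ⟨max m n, fun x hx => ?_⟩
  rw [hm x (fanU_antitone (le_max_left m n) hx), hn x (fanU_antitone (le_max_right m n) hx),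
    h_infty]

theorem _root_.IsCompact.finite_diff_fanU {K : Set Fan} (hK : IsCompact K) (n : ℕ) :
    (K \ fanU n).Finite := by
  refine (hK.diff (isOpen_fanU n)).finite (IsDiscrete.of_nhdsWithin fun x hx => ?_)
  induction x with
  | infty => exact absurd (infty_mem_fanU n) hx.2
  | pt p => exact nhdsWithin_le_nhds.trans (le_pure_iff.2 ((isOpen_singleton_pt p).mem_nhds rfl))

theorem isCompact_of_finite_diff_fanU {K : Set Fan} (h_infty : infty ∈ K)
    (hK : ∀ n, (K \ fanU n).Finite) : IsCompact K := by
  have hval : Tendsto ((↑) : K → Fan) cofinite (𝓝 infty) :=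
    hasBasis_nhds_infty.tendsto_right_iff.2 fun n _ => eventually_cofinite.2 <|
      ((hK n).preimage Subtype.val_injective.injOn).subset fun x hx => ⟨x.2, hx⟩
  simpa only [Subtype.range_coe, insert_eq_of_mem h_infty] using
    hval.isCompact_insert_range_of_cofinite

theorem tendsto_of_tendsto_apply_of_eqOn_fanU {ι : Type*} {l : Filter ι} {F : ι → C(Fan, Y)}
    {g : C(Fan, Y)} {n : ℕ} (hpt : ∀ x, Tendsto (fun i => F i x) l (𝓝 (g x)))
    (htail : ∀ i, EqOn (F i) g (fanU n)) : Tendsto F l (𝓝 g) := by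
  refine ContinuousMap.tendsto_nhds_compactOpen.2 fun K hK U hU hgKU => ?_
  have hfin : ∀ᶠ i in l, ∀ x ∈ K \ fanU n, F i x ∈ U :=
    (eventually_all_finite (hK.finite_diff_fanU n)).2 fun x hx =>
      hpt x (hU.mem_nhds (hgKU hx.1))
  filter_upwards [hfin] with i hi x hx
  by_cases hxU : x ∈ fanU n
  · rw [htail i hxU]
    exact hgKU hx
  · exact hi x ⟨hx, hxU⟩

def fanK (φ : ℕ → ℕ) : Set Fan := {x | x = none ∨ ∃ p : ℕ × ℕ, x = some p ∧ p.2 ≤ φ p.1}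

@[simp] theorem infty_mem_fanK (φ : ℕ → ℕ) : infty ∈ fanK φ := Or.inl rfl

@[simp] theorem pt_mem_fanK {φ : ℕ → ℕ} {p : ℕ × ℕ} : pt p ∈ fanK φ ↔ p.2 ≤ φ p.1 := by
  refine ⟨?_, fun h => Or.inr ⟨p, rfl, h⟩⟩
  rintro (h | ⟨q, hq, h⟩)
  · exact absurd h (Option.some_ne_none p)
  · exact Option.some_injective _ hq ▸ h

theorem isCompact_fanK (φ : ℕ → ℕ) : IsCompact (fanK φ) := by
  refine isCompact_of_finite_diff_fanU (infty_mem_fanK φ) fun n => ?_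
  refine (((finite_Iio n).biUnion fun m _ => (finite_singleton m).prod (finite_Iic (φ m))).image
    pt).subset ?_
  rintro x ⟨hxK, hxU⟩
  induction x with
  | infty => exact absurd (infty_mem_fanU n) hxU
  | pt p =>
    rw [pt_mem_fanU, not_le] at hxU
    exact ⟨p, mem_biUnion hxU ⟨mem_singleton _, pt_mem_fanK.1 hxK⟩, rfl⟩

theorem fanU_union_fanK_congr {n : ℕ} {k k' : ℕ → ℕ} (hkk' : ∀ m < n, k m = k' m) :
    fanU n ∪ fanK k = fanU n ∪ fanK k' := by
  ext (x : Fan)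
  induction x with
  | infty => simp
  | pt p =>
    simp only [mem_union, pt_mem_fanU, pt_mem_fanK]
    rcases le_or_gt n p.1 with hp | hp
    · simp [hp]
    · rw [hkk' p.1 hp]

theorem eventually_mem_fanU_succ_union_fanK_update {n : ℕ} {k : ℕ → ℕ} {x : Fan}
    (hx : x ∈ fanU n ∪ fanK k) : ∀ᶠ t in atTop, x ∈ fanU (n + 1) ∪ fanK (update k n t) := by
  induction x with
  | infty => exact .of_forall fun _ => Or.inl (infty_mem_fanU _)
  | pt p =>
    simp only [mem_union, pt_mem_fanU, pt_mem_fanK] at hx ⊢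
    rcases lt_trichotomy p.1 n with hp | hp | hp
    · refine .of_forall fun t => Or.inr ?_
      rw [update_of_ne hp.ne]
      exact hx.resolve_left hp.not_ge
    · filter_upwards [eventually_ge_atTop p.2] with t ht
      rw [hp, update_self]
      exact Or.inr ht
    · exact .of_forall fun _ => Or.inl hp

variable [DiscreteTopology Y]

theorem exists_update_forall_not_eqOn [Finite Y] {A : Set C(Fan, Y)} (hA : IsSeqClosed A)
    (f : C(Fan, Y)) {n : ℕ} {k : ℕ → ℕ} (hk : ∀ h ∈ A, ¬EqOn h f (fanU n ∪ fanK k)) :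
    ∃ t, ∀ h ∈ A, ¬EqOn h f (fanU (n + 1) ∪ fanK (update k n t)) := by
  by_contra! hcon
  choose h hhA hhf using hcon
  obtain ⟨g₀, -, ξ, hξ, hlim⟩ := (isCompact_univ : IsCompact (univ : Set (Fan → Y))).isSeqCompact
    (x := fun t => ⇑(h t)) fun _ => trivial
  have hpt : ∀ x, ∀ᶠ s in atTop, h (ξ s) x = g₀ x := fun x => by
    have hx := tendsto_pi_nhds.1 hlim x
    rwa [nhds_discrete, tendsto_pure] at hx
  have hg₀ : EqOn g₀ f (fanU n ∪ fanK k) := fun x hx => by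
    obtain ⟨s, hs, hsf⟩ := ((hpt x).and
      (hξ.tendsto_atTop.eventually (eventually_mem_fanU_succ_union_fanK_update hx))).exists
    exact hs.symm.trans (hhf _ hsf)
  have hg₀_cont : Continuous g₀ := by
    obtain ⟨m, hm⟩ := continuous_iff_exists_eqOn_fanU.1 f.continuous
    refine continuous_iff_exists_eqOn_fanU.2 ⟨max m n, fun x hx => ?_⟩
    rw [hg₀ (Or.inl (fanU_antitone (le_max_right m n) hx)), hg₀ (Or.inl (infty_mem_fanU n)),
      hm x (fanU_antitone (le_max_left m n) hx)]
  let g : C(Fan, Y) := ⟨g₀, hg₀_cont⟩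
  have hconv : Tendsto (fun s => h (ξ s)) atTop (𝓝 g) :=
    tendsto_of_tendsto_apply_of_eqOn_fanU (n := n + 1)
      (fun x => by rw [nhds_discrete, tendsto_pure]; exact hpt x)
      fun s x hx => (hhf (ξ s) (Or.inl hx)).trans
        (hg₀ (Or.inl (fanU_antitone n.le_succ hx))).symm
  exact hk g (hA (fun s => hhA (ξ s)) hconv) hg₀

theorem sequentialSpace_continuousMap [Finite Y] : SequentialSpace C(Fan, Y) := by
  refine ⟨fun A hA => isOpen_compl_iff.1 (isOpen_iff_mem_nhds.2 fun f hf => ?_)⟩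
  obtain ⟨φ, hφ⟩ := exists_forall_of_forall_exists_update
    (fun n k => ∀ h ∈ A, ¬EqOn h f (fanU n ∪ fanK k))
    (fun n k k' hkk' => fanU_union_fanK_congr hkk' ▸ id) (k₀ := 0)
    (fun h hhA hhf => hf <| by
      rw [fanU_zero, univ_union, eqOn_univ, DFunLike.coe_fn_eq] at hhf
      exact hhf ▸ hhA)
    fun n k => exists_update_forall_not_eqOn hA f
  filter_upwards [(ContinuousMap.isOpen_setOf_eqOn (isCompact_fanK φ) f).mem_nhds
    (eqOn_refl f _)] with h hK hhA
  obtain ⟨n, hn⟩ := exists_eqOn_fanU h f (hK (infty_mem_fanK φ))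
  exact hφ n h hhA (hn.union hK)

end Fan

theorem stmt9 : SequentialSpace C(Fan, Bool) := Fan.sequentialSpace_continuousMap
end

section
/- Let X be a zero-dimensional Polish space which is not locally compact. If the derived set X' is not compact, then C_k(X,2) is not σ-compact, and hence (having countable cs*-character and being separable non-metrizable) not sequential. -/
/-!
A compact set `K` of maps `X → Bool` is equicontinuous along convergent sequences: if `w i → b`
then eventually every `f ∈ K` has `f (w i) = f b`, since on the compact set `{b} ∪ range w` the
members of `K` realise only finitely many patterns.

Non-σ-compactness: take a uniformly separated sequence of non-isolated points `q n` (it exists as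
`X'` is closed but not compact). If `C(X, Bool) = ⋃ Kₙ` with `Kₙ` compact, pick `zₙ` near `q n`
on which all of `Kₙ` agree with their value at `q n`, and a small clopen `Vₙ ∋ zₙ` missing `q n`.
The `Vₙ` form a locally finite family, so the indicator of `⋃ Vₙ` is continuous; it separates
`zₙ` from `q n`, so it lies in no `Kₙ`.

Non-sequentiality: let `p` be a point without compact neighbourhood. For each `n` take clopen
tags `Tₙⱼ` converging to `q n` and a locally finite sequence of clopen sets `Bₙⱼ` inside the
punctured ball around `p` of radius `~ 1/n`, and put `Sₙⱼ = Tₙⱼ ∪ Bₙⱼ`. Every compact set of `X`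
misses some `Sₙⱼ`, so the constant map `false` is in the closure of the indicators of the `Sₙⱼ`
but is not one of them. By the equicontinuity above (along the tags for fixed `n`, along points
of the `Bₙⱼ` as `n → ∞`), a compact set of maps contains only finitely many of these indicators,
so their set is sequentially closed.
-/


open Set Filter Topology Metric TopologicalSpace

namespace ContinuousMap

section DiscreteCodomain

variable {X Y : Type*} [TopologicalSpace X] [TopologicalSpace Y] [DiscreteTopology Y]

theorem hasBasis_nhds_eqOn (g : C(X, Y)) :
    (𝓝 g).HasBasis IsCompact fun C => {f : C(X, Y) | EqOn f g C} := by
  refine ⟨fun s => ⟨fun hs => ?_, ?_⟩⟩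
  · obtain ⟨S, hSfin, hS, hsub⟩ := ContinuousMap.mem_nhds_iff.1 hs
    refine ⟨⋃ KU ∈ S, KU.1, hSfin.isCompact_biUnion fun KU hKU => (hS _ _ hKU).1, ?_⟩
    refine fun f hf => hsub fun K U hKU x hx => ?_
    rw [hf (mem_biUnion hKU hx)]
    exact (hS K U hKU).2.2 hx
  · rintro ⟨C, hC, hsub⟩
    refine mem_of_superset ?_ hsub
    -- `g '' C` is finite, and `f` agrees with `g` on `C` iff it maps every compact fibre
    -- `C ∩ g ⁻¹' {y}` into `{y}`.
    have hfin : (g '' C).Finite := (hC.image g.continuous).finite_of_discrete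
    have hfibre : ∀ y ∈ g '' C, {f : C(X, Y) | MapsTo f (C ∩ g ⁻¹' {y}) {y}} ∈ 𝓝 g :=
      fun y _ => (isOpen_setOfPred_mapsTo
        (hC.inter_right ((isClosed_discrete _).preimage g.continuous)) (isOpen_discrete _)).mem_nhds
          fun x hx => hx.2
    filter_upwards [(biInter_mem hfin).2 hfibre] with f hf x hx
    exact mem_iInter₂.1 hf (g x) (mem_image_of_mem g hx) ⟨hx, rfl⟩

theorem _root_.IsCompact.eventually_forall_apply_eq {K : Set C(X, Y)} (hK : IsCompact K)
    {w : ℕ → X} {b : X} (hw : Tendsto w atTop (𝓝 b)) :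
    ∀ᶠ i in atTop, ∀ f ∈ K, f (w i) = f b := by
  have hL := hw.isCompact_insert_range
  obtain ⟨t, -, hKt⟩ :=
    hK.elim_nhds_subcover (fun g => {f : C(X, Y) | EqOn f g (insert b (range w))})
      fun g _ => (hasBasis_nhds_eqOn g).mem_of_mem hL
  have hcont : ∀ᶠ i in atTop, ∀ g ∈ t, g (w i) = g b :=
    (eventually_all_finset t).2 fun g _ =>
      tendsto_pure.1 <| nhds_discrete Y ▸ (g.continuous.tendsto b).comp hw
  filter_upwards [hcont] with i hi f hf
  obtain ⟨g, hgt, hfg⟩ := mem_iUnion₂.1 (hKt hf)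
  rw [hfg (mem_insert_of_mem _ (mem_range_self i)), hfg (mem_insert b _), hi g hgt]

theorem _root_.IsCompact.finite_setOf_mem_of_apply_ne {K : Set C(X, Y)} (hK : IsCompact K)
    {w : ℕ → X} {b : X} (hw : Tendsto w atTop (𝓝 b)) {g : ℕ → C(X, Y)}
    (hg : ∀ i, g i (w i) ≠ g i b) : {i | g i ∈ K}.Finite := by
  have : ∀ᶠ i in cofinite, g i ∉ K := by
    rw [Nat.cofinite_eq_atTop]
    filter_upwards [hK.eventually_forall_apply_eq hw] with i hi hgK
    exact hg i (hi _ hgK)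
  simpa only [not_not] using eventually_cofinite.1 this

end DiscreteCodomain

variable {X : Type*} [TopologicalSpace X]

noncomputable def boolIndicator (s : Set X) (hs : IsClopen s) : C(X, Bool) :=
  ⟨s.boolIndicator, (continuous_boolIndicator_iff_isClopen s).2 hs⟩

theorem boolIndicator_apply_eq_true {s : Set X} (hs : IsClopen s) {x : X} :
    boolIndicator s hs x = true ↔ x ∈ s :=
  (s.mem_iff_boolIndicator x).symm

theorem boolIndicator_apply_eq_false {s : Set X} (hs : IsClopen s) {x : X} :
    boolIndicator s hs x = false ↔ x ∉ s :=
  (s.notMem_iff_boolIndicator x).symm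

end ContinuousMap

theorem IsSeqClosed.of_finite_inter_isCompact {X : Type*} [TopologicalSpace X] [T1Space X]
    {F : Set X} (hF : ∀ K, IsCompact K → (F ∩ K).Finite) : IsSeqClosed F := by
  intro u a huF hua
  have hfin : (range u).Finite := (hF _ hua.isCompact_insert_range).subset
    (range_subset_iff.2 fun n => ⟨huF n, mem_insert_of_mem _ (mem_range_self n)⟩)
  obtain ⟨n, rfl⟩ : a ∈ range u :=
    hfin.isClosed.closure_subset <|
      mem_closure_of_tendsto hua (Eventually.of_forall mem_range_self)
  exact huF n

/-- Clopen sets `S n j` whose indicators accumulate at the constant map `false`, while the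
convergent sequences along each row and along the diagonal prevent a compact set of maps from
containing infinitely many of these indicators. -/
structure ClopenFan (X : Type*) [TopologicalSpace X] where
  S : ℕ → ℕ → Set X
  isClopen : ∀ n j, IsClopen (S n j)
  exists_disjoint : ∀ C, IsCompact C → ∃ n j, Disjoint (S n j) C
  row : ∀ n, ∃ b, ∃ w : ℕ → X, Tendsto w atTop (𝓝 b) ∧ ∀ j, w j ∈ S n j ∧ b ∉ S n j
  diag : ∃ b, ∃ w : ℕ → ℕ → X, (∀ j : ℕ → ℕ, Tendsto (fun n => w n (j n)) atTop (𝓝 b)) ∧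
    ∀ n j, w n j ∈ S n j ∧ b ∉ S n j

namespace ClopenFan

variable {X : Type*} [TopologicalSpace X]

noncomputable def indicator (φ : ClopenFan X) (n j : ℕ) : C(X, Bool) :=
  ContinuousMap.boolIndicator (φ.S n j) (φ.isClopen n j)

theorem indicator_apply_ne (φ : ClopenFan X) {n j : ℕ} {x b : X} (hx : x ∈ φ.S n j)
    (hb : b ∉ φ.S n j) :
    φ.indicator n j x ≠ φ.indicator n j b := by
  rw [indicator, (ContinuousMap.boolIndicator_apply_eq_true _).2 hx,
    (ContinuousMap.boolIndicator_apply_eq_false _).2 hb]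
  decide

theorem finite_setOf_indicator_mem (φ : ClopenFan X) {K : Set C(X, Bool)} (hK : IsCompact K) :
    {nj : ℕ × ℕ | φ.indicator nj.1 nj.2 ∈ K}.Finite := by
  have hrow : ∀ n, {j | φ.indicator n j ∈ K}.Finite := fun n => by
    obtain ⟨b, w, hw, hwS⟩ := φ.row n
    exact hK.finite_setOf_mem_of_apply_ne hw fun j => φ.indicator_apply_ne (hwS j).1 (hwS j).2
  have hcol : {n | ∃ j, φ.indicator n j ∈ K}.Finite := by
    obtain ⟨b, w, hw, hwS⟩ := φ.diag
    have : ∀ n, (∃ j, φ.indicator n j ∈ K) → ∃ j, φ.indicator n j ∈ K := fun _ => id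
    choose! j hj using this
    exact (hK.finite_setOf_mem_of_apply_ne (g := fun n => φ.indicator n (j n)) (hw j)
      fun n => φ.indicator_apply_ne (hwS n (j n)).1 (hwS n (j n)).2).subset hj
  refine (hcol.prod (hcol.biUnion fun n _ => hrow n)).subset fun ⟨n, j⟩ h => ?_
  exact ⟨⟨j, h⟩, mem_biUnion (x := n) ⟨j, h⟩ h⟩

theorem not_sequentialSpace (φ : ClopenFan X) : ¬SequentialSpace C(X, Bool) := by
  intro _
  set F := range fun nj : ℕ × ℕ => φ.indicator nj.1 nj.2
  have hF : IsClosed F := IsSeqClosed.isClosed <| .of_finite_inter_isCompact fun K hK =>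
    ((φ.finite_setOf_indicator_mem hK).image _).subset
      fun _ ⟨⟨nj, hnj⟩, hK⟩ => ⟨nj, (hnj ▸ hK :), hnj⟩
  have hmem : ContinuousMap.const X false ∈ closure F := by
    refine (mem_closure_iff_nhds_basis (ContinuousMap.hasBasis_nhds_eqOn _)).2 fun C hC => ?_
    obtain ⟨n, j, hdisj⟩ := φ.exists_disjoint C hC
    exact ⟨_, ⟨(n, j), rfl⟩, fun x hx =>
      (ContinuousMap.boolIndicator_apply_eq_false _).2 (hdisj.notMem_of_mem_right hx)⟩
  obtain ⟨⟨n, j⟩, hnj⟩ := hF.closure_subset hmem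
  obtain ⟨b, w, -, hwS⟩ := φ.row n
  simp only at hnj
  exact φ.indicator_apply_ne (hwS j).1 (hwS j).2 (by rw [hnj]; rfl)

end ClopenFan

theorem isClosed_setOf_not_isOpen_singleton {X : Type*} [TopologicalSpace X] :
    IsClosed {x : X | ¬IsOpen {x}} :=
  isOpen_compl_iff.1 <| isOpen_iff_forall_mem_open.2 fun x hx =>
    ⟨{x}, by simpa using hx, not_not.1 hx, rfl⟩

theorem exists_seq_tendsto_mem_isClopen_subset {X : Type*} [TopologicalSpace X]
    [FrechetUrysohnSpace X] [T1Space X] (hB : IsTopologicalBasis {s : Set X | IsClopen s})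
    {q : X} (hq : ¬IsOpen {q}) {U : Set X} (hU : IsOpen U) (hqU : q ∈ U) :
    ∃ t : ℕ → X, ∃ T : ℕ → Set X, Tendsto t atTop (𝓝 q) ∧
      ∀ j, IsClopen (T j) ∧ t j ∈ T j ∧ T j ⊆ U \ {q} := by
  obtain ⟨t, htU, htq⟩ := mem_closure_iff_seq_limit.1 <|
    (dense_compl_singleton_iff_not_open.2 hq).open_subset_closure_inter hU hqU
  choose T hT using fun j => hB.exists_subset_of_mem_open (htU j) (hU.sdiff isClosed_singleton)
  exact ⟨t, T, htq, hT⟩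

section Metric

variable {X : Type*}

theorem exists_pairwise_le_dist_of_not_totallyBounded [PseudoMetricSpace X] {s : Set X}
    (hs : ¬TotallyBounded s) :
    ∃ δ > 0, ∃ u : ℕ → X, (∀ n, u n ∈ s) ∧ Pairwise fun m n => δ ≤ dist (u m) (u n) := by
  simp only [Metric.totallyBounded_iff, not_forall, not_exists] at hs
  obtain ⟨δ, hδ, hcover⟩ := hs
  obtain ⟨u, hu⟩ := seq_of_forall_finite_exists (P := fun x t => x ∈ s ∧ ∀ y ∈ t, δ ≤ dist x y)
    fun t ht => by
      obtain ⟨x, hxs, hx⟩ := not_subset.1 fun h => hcover t ⟨ht, h⟩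
      simp only [mem_iUnion₂, mem_ball, not_exists, not_lt] at hx
      exact ⟨x, hxs, fun y hy => hx y hy⟩
  refine ⟨δ, hδ, u, fun n => (hu n).1, fun m n hmn => ?_⟩
  rcases hmn.lt_or_gt with h | h
  · exact dist_comm (u n) (u m) ▸ (hu n).2 _ (mem_image_of_mem u h)
  · exact (hu m).2 _ (mem_image_of_mem u h)

theorem locallyFinite_ball_of_pairwise_le_dist [PseudoMetricSpace X] {ι : Type*} {u : ι → X}
    {δ : ℝ} (hu : Pairwise fun i j => δ ≤ dist (u i) (u j)) :
    LocallyFinite fun i => ball (u i) (δ / 4) := by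
  rcases le_or_gt δ 0 with hδ | hδ
  · refine fun x => ⟨univ, univ_mem, ?_⟩
    simp [ball_eq_empty.2 (by linarith : δ / 4 ≤ 0)]
  refine fun x => ⟨ball x (δ / 4), ball_mem_nhds x (by positivity), Subsingleton.finite ?_⟩
  rintro i ⟨y, hyi, hyx⟩ j ⟨z, hzj, hzx⟩
  by_contra hij
  have := hu hij
  have := dist_triangle4 (u i) y z (u j)
  have := dist_triangle_right y z x
  rw [mem_ball] at hyi hyx hzj hzx
  rw [dist_comm] at hyi
  linarith

theorem exists_locallyFinite_isClopen_of_not_totallyBounded [PseudoMetricSpace X]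
    (hB : IsTopologicalBasis {s : Set X | IsClopen s}) {U : Set X} (hU : IsOpen U)
    (hUtb : ¬TotallyBounded U) :
    ∃ v : ℕ → X, ∃ B : ℕ → Set X, LocallyFinite B ∧ ∀ j, IsClopen (B j) ∧ v j ∈ B j ∧ B j ⊆ U := by
  obtain ⟨d, hd, v, hvU, hv⟩ := exists_pairwise_le_dist_of_not_totallyBounded hUtb
  choose B hB using fun j => hB.exists_subset_of_mem_open
    (⟨hvU j, mem_ball_self (by positivity)⟩ : v j ∈ U ∩ ball (v j) (d / 4)) (hU.inter isOpen_ball)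
  exact ⟨v, B, (locallyFinite_ball_of_pairwise_le_dist hv).subset fun j =>
    (hB j).2.2.trans inter_subset_right, fun j => ⟨(hB j).1, (hB j).2.1,
    (hB j).2.2.trans inter_subset_left⟩⟩

theorem not_totallyBounded_ball_diff_singleton [PseudoMetricSpace X] [CompleteSpace X] {p : X}
    (hp : ∀ K, IsCompact K → K ∉ 𝓝 p) {r : ℝ} (hr : 0 < r) : ¬TotallyBounded (ball p r \ {p}) := by
  intro h
  have hball : TotallyBounded (ball p r) := by
    simpa [insert_sdiff_singleton, mem_ball_self hr] using h.insert p
  exact hp _ ((hball.subset (closedBall_subset_ball (half_lt_self hr))).isCompact_of_isClosed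
    isClosed_closedBall) (closedBall_mem_nhds p (half_pos hr))

theorem exists_nonisolated_pairwise_le_dist [MetricSpace X] [CompleteSpace X]
    (hX' : ¬IsCompact {x : X | ¬IsOpen {x}}) (p : X) :
    ∃ δ > 0, ∃ q : ℕ → X, (∀ n, ¬IsOpen {q n}) ∧ (Pairwise fun m n => δ ≤ dist (q m) (q n)) ∧
      ∀ n, δ / 4 ≤ dist (q n) p := by
  obtain ⟨δ, hδ, q, hq, hsep⟩ := exists_pairwise_le_dist_of_not_totallyBounded fun h =>
    hX' (h.isCompact_of_isClosed isClosed_setOf_not_isOpen_singleton)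
  -- Only finitely many of the balls `ball (q n) (δ / 4)` contain `p`: drop the first terms.
  have hfar : ∀ᶠ n in atTop, δ / 4 ≤ dist (q n) p := by
    rw [← Nat.cofinite_eq_atTop, eventually_cofinite]
    refine ((locallyFinite_ball_of_pairwise_le_dist hsep).finite_nonempty_inter_compact
      isCompact_singleton).subset fun n hn => ⟨p, ?_, rfl⟩
    rw [mem_ball, dist_comm]
    exact lt_of_not_ge hn
  obtain ⟨N, hN⟩ := eventually_atTop.1 hfar
  exact ⟨δ, hδ, fun n => q (n + N), fun n => hq _, hsep.comp_of_injective (add_left_injective N),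
    fun n => hN _ (Nat.le_add_left N n)⟩

theorem not_sigmaCompactSpace_of_pairwise_le_dist [MetricSpace X]
    (hB : IsTopologicalBasis {s : Set X | IsClopen s}) {δ : ℝ} (hδ : 0 < δ) {q : ℕ → X}
    (hq : ∀ n, ¬IsOpen {q n}) (hsep : Pairwise fun m n => δ ≤ dist (q m) (q n)) :
    ¬SigmaCompactSpace C(X, Bool) := by
  intro _
  have hz : ∀ n, ∃ z, ∃ V : Set X, IsClopen V ∧ z ∈ V ∧ V ⊆ ball (q n) (δ / 4) \ {q n} ∧
      ∀ f ∈ compactCovering C(X, Bool) n, f z = f (q n) := fun n => by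
    obtain ⟨t, T, htq, hT⟩ := exists_seq_tendsto_mem_isClopen_subset hB (hq n) isOpen_ball
      (mem_ball_self (by positivity : 0 < δ / 4))
    obtain ⟨j, hj⟩ :=
      ((isCompact_compactCovering C(X, Bool) n).eventually_forall_apply_eq htq).exists
    exact ⟨t j, T j, (hT j).1, (hT j).2.1, (hT j).2.2, hj⟩
  choose z V hV hzV hVq hzK using hz
  have hW : IsClopen (⋃ n, V n) :=
    ⟨((locallyFinite_ball_of_pairwise_le_dist hsep).subset fun n => (hVq n).trans sdiff_subset)
      |>.isClosed_iUnion fun n => (hV n).isClosed, isOpen_iUnion fun n => (hV n).isOpen⟩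
  have hqW : ∀ n, q n ∉ ⋃ m, V m := fun n hn => by
    obtain ⟨m, hm⟩ := mem_iUnion.1 hn
    obtain ⟨hball, hne⟩ := hVq m hm
    rcases eq_or_ne n m with rfl | hnm
    · exact hne rfl
    · exact (hsep hnm).not_gt (by rw [mem_ball] at hball; linarith)
  obtain ⟨n, hn⟩ := exists_mem_compactCovering (ContinuousMap.boolIndicator _ hW)
  have := hzK n _ hn
  rw [(ContinuousMap.boolIndicator_apply_eq_true hW).2 (mem_iUnion_of_mem n (hzV n)),
    (ContinuousMap.boolIndicator_apply_eq_false hW).2 (hqW n)] at this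
  exact Bool.noConfusion this

theorem nonempty_clopenFan [MetricSpace X] [CompleteSpace X]
    (hB : IsTopologicalBasis {s : Set X | IsClopen s}) {p : X} (hp : ∀ K, IsCompact K → K ∉ 𝓝 p)
    {δ : ℝ} (hδ : 0 < δ) {q : ℕ → X} (hq : ∀ n, ¬IsOpen {q n})
    (hsep : Pairwise fun m n => δ ≤ dist (q m) (q n)) (hfar : ∀ n, δ / 4 ≤ dist (q n) p) :
    Nonempty (ClopenFan X) := by
  set r : ℕ → ℝ := fun n => δ / 4 / (n + 1)
  have hr : ∀ n, 0 < r n := fun n => by positivity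
  have hr_le : ∀ n, r n ≤ δ / 4 := fun n => div_le_self (by positivity) (by simp)
  have hr0 : Tendsto r atTop (𝓝 0) := by
    simpa [r, Function.comp_def] using
      (tendsto_const_div_atTop_nhds_zero_nat (δ / 4)).comp (tendsto_add_atTop_nat 1)
  choose t T htq hT using fun n => exists_seq_tendsto_mem_isClopen_subset hB (hq n) isOpen_ball
    (mem_ball_self (by positivity : 0 < δ / 4))
  choose v B hBlf hB' using fun n => exists_locallyFinite_isClopen_of_not_totallyBounded hB
    (isOpen_ball.sdiff isClosed_singleton) (not_totallyBounded_ball_diff_singleton hp (hr n))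
  have hqB : ∀ n j, q n ∉ B n j := fun n j h => by
    have := mem_ball.1 ((hB' n j).2.2 h).1
    linarith [hr_le n, hfar n]
  have hpT : ∀ n j, p ∉ T n j := fun n j h => by
    have := mem_ball.1 ((hT n j).2.2 h).1
    rw [dist_comm] at this
    linarith [hfar n]
  refine ⟨{ S := fun n j => T n j ∪ B n j
            isClopen := fun n j => (hT n j).1.union (hB' n j).1
            exists_disjoint := fun C hC => ?_
            row := fun n => ⟨q n, t n, htq n, fun j => ⟨Or.inl (hT n j).2.1, ?_⟩⟩
            diag := ⟨p, v, fun j => ?_, fun n j => ⟨Or.inr (hB' n j).2.1, ?_⟩⟩ }⟩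
  · obtain ⟨n, hn⟩ :=
      ((locallyFinite_ball_of_pairwise_le_dist hsep).finite_nonempty_inter_compact hC).exists_notMem
    obtain ⟨j, hj⟩ := ((hBlf n).finite_nonempty_inter_compact hC).exists_notMem
    refine ⟨n, j, disjoint_union_left.2 ⟨?_, ?_⟩⟩
    · exact (disjoint_iff_inter_eq_empty.2 (not_nonempty_iff_eq_empty.1 hn)).mono_left
        ((hT n j).2.2.trans sdiff_subset)
    · exact disjoint_iff_inter_eq_empty.2 (not_nonempty_iff_eq_empty.1 hj)
  · rintro (h | h)
    · exact ((hT n j).2.2 h).2 rfl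
    · exact hqB n j h
  · rw [tendsto_iff_dist_tendsto_zero]
    exact squeeze_zero (fun _ => dist_nonneg)
      (fun n => (mem_ball.1 ((hB' n (j n)).2.2 (hB' n (j n)).2.1).1).le) hr0
  · rintro (h | h)
    · exact hpT n j h
    · exact ((hB' n j).2.2 h).2 rfl

end Metric

theorem stmt15 {X : Type*} [TopologicalSpace X] [PolishSpace X]
    (hzd : ∀ (x : X) (U : Set X), IsOpen U → x ∈ U →
      ∃ V : Set X, IsClopen V ∧ x ∈ V ∧ V ⊆ U)
    (hnlc : ¬ WeaklyLocallyCompactSpace X)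
    (hX' : ¬ IsCompact {x : X | ¬ IsOpen ({x} : Set X)}) :
    ¬ SigmaCompactSpace C(X, Bool) ∧ ¬ SequentialSpace C(X, Bool) := by
  let := upgradeIsCompletelyMetrizable X
  have hB : IsTopologicalBasis {s : Set X | IsClopen s} :=
    isTopologicalBasis_of_isOpen_of_nhds (fun _ hs => hs.isOpen) fun x U hxU hU => hzd x U hU hxU
  obtain ⟨p, hp⟩ : ∃ p : X, ∀ K, IsCompact K → K ∉ 𝓝 p := by
    by_contra! h
    exact hnlc ⟨h⟩
  obtain ⟨δ, hδ, q, hq, hsep, hfar⟩ := exists_nonisolated_pairwise_le_dist hX' p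
  exact ⟨not_sigmaCompactSpace_of_pairwise_le_dist hB hδ hq hsep,
    (nonempty_clopenFan hB hp hδ hq hsep hfar).some.not_sequentialSpace⟩
end
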